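/- arXiv:2109.15124 — 4 statements merged into one kernel-verified Lean document; each statement's English description precedes it below -/
import Mathlib

section
/- Let A be a unital *-algebra, H a Hilbert space, and φ : A^{2m−1} → B(H) a symmetric k-linear map (k = 2m−1) such that for all n and all a_{p,j} ∈ A, g_j ∈ H, the matrix sum Σ_{i,j} ⟨φ(a_{m,i}*,…,a_{2,i}*, a_{1,i}* a_{1,j}, a_{2,j},…,a_{m,j}) g_j, g_i⟩ ≥ 0 (complete positivity on symmetric tuples). Suppose additionally φ is invariant: φ(a₁c₁,…,a_{m−1}c_{m−1}, a_m, a_{m+1},…,a_{2m−1}) = φ(a₁,…,a_{m−1}, a_m, c_{m−1}a_{m+1},…, c₁ a_{2m−1}). Then for each 1 ≤ p ≤ m and each a ∈ A, the left-multiplication operator π_p(a)(a₁⊗…⊗a_p⊗…⊗a_m⊗g + N) = a₁⊗…⊗a a_p⊗…⊗a_m⊗g + N is well defined on the quotient (A^{⊗m}⊗H)/N, where N is the null space of the induced semi-inner product. -/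
open scoped ComplexOrder

variable {A : Type*} [Ring A] [StarRing A] [Algebra ℂ A] [StarModule ℂ A]
variable {H : Type*} [NormedAddCommGroup H] [InnerProductSpace ℂ H] [CompleteSpace H]
variable {r : ℕ}

/-- The canonical semi-inner product of elementary tensors `a₁⊗…⊗a_m⊗g` and `b₁⊗…⊗b_m⊗h`
(`m = r+1`, odd case `k = 2m−1 = 2r+1`) associated to a `k`-linear map `φ`, namely
`⟨φ(b_m*,…,b₂*, b₁*a₁, a₂,…,a_m)g, h⟩`.  A `(2r+1)`-linear map `A^{2r+1} → B(H)` is encoded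
in uncurried form `φ : (Fin r → A) → A → (Fin r → A) → (H →L[ℂ] H)`, the middle argument
being the `m`-th variable.  (The paper's inner product `⟨u, v⟩` is linear in `u`; Mathlib's
`inner u v` is linear in `v`, so the paper's `⟨u, v⟩` is `inner v u` here.) -/
noncomputable def gram (φ : (Fin r → A) → A → (Fin r → A) → (H →L[ℂ] H))
    (a : Fin (r + 1) → A) (g : H) (b : Fin (r + 1) → A) (h : H) : ℂ :=
  inner ℂ h ((φ (fun i => star (b i.rev.succ)) (star (b 0) * a 0) (fun i => a i.succ)) g)

/-- `φ` is `(2r+1)`-linear: complex-linear in each of its `2r+1` variables. -/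
def IsMultilinearOdd (φ : (Fin r → A) → A → (Fin r → A) → (H →L[ℂ] H)) : Prop :=
  (∀ x z, IsLinearMap ℂ fun y => φ x y z) ∧
  (∀ x y z (i : Fin r), IsLinearMap ℂ fun u => φ (Function.update x i u) y z) ∧
  (∀ x y z (i : Fin r), IsLinearMap ℂ fun u => φ x y (Function.update z i u))

/-- `φ` is symmetric: `φ(a₁,…,a_k)* = φ(a_k*,…,a₁*)`. -/
def IsSymmMapOdd (φ : (Fin r → A) → A → (Fin r → A) → (H →L[ℂ] H)) : Prop :=
  ∀ x y z, star (φ x y z) = φ (fun i => star (z i.rev)) (star y) (fun i => star (x i.rev))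

/-- `φ` is invariant:
`φ(a₁c₁,…,a_{m−1}c_{m−1}, a_m, a_{m+1},…,a_{2m−1}) = φ(a₁,…,a_m, c_{m−1}a_{m+1},…,c₁a_{2m−1})`. -/
def IsInvariantOdd (φ : (Fin r → A) → A → (Fin r → A) → (H →L[ℂ] H)) : Prop :=
  ∀ (x c : Fin r → A) (y : A) (z : Fin r → A),
    φ (fun i => x i * c i) y z = φ x y (fun i => c i.rev * z i)

/-- `φ` is completely positive: the canonical sesquilinear form on `A^{⊗m} ⊗ H` is positive
semi-definite, i.e. all Gram sums over finite families of elementary tensors are `≥ 0`. -/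
def IsCPOdd (φ : (Fin r → A) → A → (Fin r → A) → (H →L[ℂ] H)) : Prop :=
  ∀ (n : ℕ) (a : Fin n → Fin (r + 1) → A) (g : Fin n → H),
    0 ≤ ∑ j, ∑ i, gram φ (a j) (g j) (a i) (g i)

/-- The action of `π_p(a)`: multiply the `p`-th tensor slot on the left by `a`. -/
def mulSlot (p : Fin (r + 1)) (a : A) (c : Fin (r + 1) → A) : Fin (r + 1) → A :=
  Function.update c p (a * c p)

/-!
Invariance makes `π_p(a*)` the adjoint of `π_p(a)` for the semi-inner product, so
`⟨π_p(a)ξ, π_p(a)ξ⟩ = ⟨ξ, π_p(a*)π_p(a)ξ⟩`. Complete positivity says the semi-inner product is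
positive semi-definite, and symmetry that it is Hermitian; by Cauchy–Schwarz a null vector `ξ` is
orthogonal to everything, in particular to `π_p(a*)π_p(a)ξ`.
-/

set_option linter.unusedSectionVars false

open ComplexConjugate

theorem Complex.eq_zero_of_forall_quadratic_nonneg {z β : ℂ} (hβ : 0 ≤ β)
    (h : ∀ t : ℂ, 0 ≤ conj t * z + t * conj z + t * conj t * β) : z = 0 := by
  obtain ⟨b, hb, rfl⟩ : ∃ b : ℝ, 0 ≤ b ∧ β = b :=
    ⟨β.re, by simpa using (Complex.nonneg_iff.mp hβ).1,
      Complex.ext rfl (Complex.nonneg_iff.mp hβ).2.symm⟩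
  set s : ℝ := 1 / (b + 1)
  have hs : 0 < s := by positivity
  have hsb : s * b < 1 := by
    rw [one_div_mul_eq_div, div_lt_one (by linarith)]; linarith
  -- `t = -s z` makes the quadratic equal to `s (s b - 2) |z|²`, negative unless `z = 0`
  have key : 0 ≤ s * (s * b - 2) * Complex.normSq z := by
    have hexpand : conj (-(s : ℂ) * z) * z + -(s : ℂ) * z * conj z
        + -(s : ℂ) * z * conj (-(s : ℂ) * z) * b
        = ((s * (s * b - 2) * Complex.normSq z : ℝ) : ℂ) := by
      simp only [map_mul, map_neg, Complex.conj_ofReal, Complex.ofReal_mul, Complex.ofReal_sub,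
        Complex.ofReal_ofNat, ← Complex.mul_conj]
      ring
    exact_mod_cast hexpand ▸ h (-(s : ℂ) * z)
  by_contra hz
  have := Complex.normSq_pos.mpr hz
  nlinarith [mul_pos hs this]

lemma IsInvariantOdd.map_update {φ : (Fin r → A) → A → (Fin r → A) → (H →L[ℂ] H)}
    (hinv : IsInvariantOdd φ) (x : Fin r → A) (y : A) (z : Fin r → A) (j : Fin r) (a : A) :
    φ (Function.update x j (x j * a)) y z = φ x y (Function.update z j.rev (a * z j.rev)) := by
  convert hinv x (Pi.mulSingle j a) y z using 2 <;> funext i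
  · by_cases hi : i = j
    · subst hi; simp
    · simp [hi]
  · by_cases hi : i = j.rev
    · subst hi; simp
    · simp [hi, Fin.rev_eq_iff]

section Gram

variable {φ : (Fin r → A) → A → (Fin r → A) → (H →L[ℂ] H)}

lemma gram_swap (hsymm : IsSymmMapOdd φ) (a : Fin (r + 1) → A) (g : H)
    (b : Fin (r + 1) → A) (h : H) : gram φ b h a g = conj (gram φ a g b h) := by
  have hstar := hsymm (fun i => star (b i.rev.succ)) (star (b 0) * a 0) (fun i => a i.succ)
  simp only [star_star, star_mul, Fin.rev_rev] at hstar
  rw [gram, gram, ← hstar, ContinuousLinearMap.star_eq_adjoint,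
    ContinuousLinearMap.adjoint_inner_right, inner_conj_symm]

/-- For `p = 0` this is associativity inside `b₀* a₀`; for `p > 0` invariance carries `a` from
slot `p` of the right half of `φ` to the mirror slot of the left half. -/
lemma gram_mulSlot (hinv : IsInvariantOdd φ) (p : Fin (r + 1)) (a : A)
    (c : Fin (r + 1) → A) (g : H) (d : Fin (r + 1) → A) (h : H) :
    gram φ (mulSlot p a c) g d h = gram φ c g (mulSlot p (star a) d) h := by
  induction p using Fin.cases with
  | zero => simp [gram, mulSlot, Fin.succ_ne_zero, mul_assoc]
  | succ q =>
    have hc : (fun i => mulSlot q.succ a c i.succ)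
        = Function.update (fun i => c i.succ) q (a * c q.succ) :=
      Function.update_comp_eq_of_injective c (Fin.succ_injective r) q _
    have hd : (fun i => star (mulSlot q.succ (star a) d i.rev.succ))
        = Function.update (fun i => star (d i.rev.succ)) q.rev (star (d q.succ) * a) := by
      funext i
      by_cases hi : i = q.rev
      · subst hi; simp [mulSlot]
      · simp [mulSlot, hi, Fin.rev_eq_iff]
    have h0 (x : A) (e : Fin (r + 1) → A) : mulSlot q.succ x e 0 = e 0 :=
      Function.update_of_ne (Fin.succ_ne_zero q).symm _ _
    have hmove := hinv.map_update (fun i => star (d i.rev.succ)) (star (d 0) * c 0)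
      (fun i => c i.succ) q.rev a
    simp only [Fin.rev_rev] at hmove
    rw [gram, gram, h0, h0, hc, hd, hmove]

/-- The paper's semi-inner product `⟨Σⱼ cⱼ ⊗ gⱼ, Σᵢ dᵢ ⊗ hᵢ⟩` on `A^{⊗(r+1)} ⊗ H`. -/
noncomputable def gramSum {m n : ℕ} (φ : (Fin r → A) → A → (Fin r → A) → (H →L[ℂ] H))
    (c : Fin m → Fin (r + 1) → A) (g : Fin m → H) (d : Fin n → Fin (r + 1) → A)
    (h : Fin n → H) : ℂ :=
  ∑ j, ∑ i, gram φ (c j) (g j) (d i) (h i)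

variable {m n : ℕ} (c : Fin m → Fin (r + 1) → A) (g : Fin m → H)
  (d : Fin n → Fin (r + 1) → A) (h : Fin n → H)

lemma gramSum_swap (hsymm : IsSymmMapOdd φ) : gramSum φ d h c g = conj (gramSum φ c g d h) := by
  simp only [gramSum, map_sum, gram_swap hsymm (c _)]
  exact Finset.sum_comm

lemma gramSum_smul_left (t : ℂ) : gramSum φ c (t • g) d h = t * gramSum φ c g d h := by
  simp only [gramSum, Pi.smul_apply, gram, map_smul, inner_smul_right, Finset.mul_sum]

lemma gramSum_smul_right (t : ℂ) : gramSum φ c g d (t • h) = conj t * gramSum φ c g d h := by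
  simp only [gramSum, Pi.smul_apply, gram, inner_smul_left, Finset.mul_sum]

lemma gramSum_append :
    gramSum φ (Fin.append c d) (Fin.append g h) (Fin.append c d) (Fin.append g h)
      = gramSum φ c g c g + gramSum φ d h c g + (gramSum φ c g d h + gramSum φ d h d h) := by
  simp only [gramSum, Fin.sum_univ_add, Fin.append_left, Fin.append_right,
    Finset.sum_add_distrib]

lemma gramSum_mulSlot (hinv : IsInvariantOdd φ) (p : Fin (r + 1)) (a : A) :
    gramSum φ (fun j => mulSlot p a (c j)) g d h
      = gramSum φ c g (fun i => mulSlot p (star a) (d i)) h := by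
  simp only [gramSum, gram_mulSlot hinv]

/-- The null-vector case of Cauchy–Schwarz: `0 ≤ ⟨ξ + tη, ξ + tη⟩` for all `t` forces
`⟨ξ, η⟩ = 0`. -/
lemma gramSum_eq_zero_of_self_eq_zero (hsymm : IsSymmMapOdd φ) (hcp : IsCPOdd φ)
    (hc : gramSum φ c g c g = 0) : gramSum φ c g d h = 0 := by
  refine Complex.eq_zero_of_forall_quadratic_nonneg (β := gramSum φ d h d h) (hcp n d h)
    fun t => ?_
  have hpos := hcp _ (Fin.append c d) (Fin.append g (t • h))
  rw [← gramSum, gramSum_append, hc, gramSum_smul_right, gramSum_smul_left, gramSum_smul_left,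
    gramSum_smul_right, gramSum_swap c g d h hsymm] at hpos
  convert hpos using 1
  ring

end Gram

theorem stmt5_general (φ : (Fin r → A) → A → (Fin r → A) → (H →L[ℂ] H))
    (hsymm : IsSymmMapOdd φ)
    (hinv : IsInvariantOdd φ) (hcp : IsCPOdd φ)
    (p : Fin (r + 1)) (a : A) {n : ℕ}
    (c : Fin n → Fin (r + 1) → A) (g : Fin n → H)
    (hnull : ∑ j, ∑ i, gram φ (c j) (g j) (c i) (g i) = 0) :
    ∑ j, ∑ i, gram φ (mulSlot p a (c j)) (g j) (mulSlot p a (c i)) (g i) = 0 := by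
  change gramSum φ (fun j => mulSlot p a (c j)) g (fun i => mulSlot p a (c i)) g = 0
  rw [gramSum_mulSlot _ _ _ _ hinv]
  exact gramSum_eq_zero_of_self_eq_zero _ _ _ _ hsymm hcp hnull

/-- For a symmetric invariant completely positive `(2m−1)`-linear map `φ`, the left
multiplication operators `π_p(a)` are well defined on the quotient `(A^{⊗m}⊗H)/N`: they map
the null space `N` of the induced semi-inner product into itself.  Here a vector of
`A^{⊗m}⊗H` is the finite sum `Σⱼ c_{1,j}⊗…⊗c_{m,j}⊗gⱼ`, its squared seminorm is the Gram
sum, and `π_p(a)` multiplies the `p`-th slot by `a`. -/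
theorem stmt5 (φ : (Fin r → A) → A → (Fin r → A) → (H →L[ℂ] H))
    (hlin : IsMultilinearOdd φ) (hsymm : IsSymmMapOdd φ)
    (hinv : IsInvariantOdd φ) (hcp : IsCPOdd φ)
    (p : Fin (r + 1)) (a : A) {n : ℕ}
    (c : Fin n → Fin (r + 1) → A) (g : Fin n → H)
    (hnull : ∑ j, ∑ i, gram φ (c j) (g j) (c i) (g i) = 0) :
    ∑ j, ∑ i, gram φ (mulSlot p a (c j)) (g j) (mulSlot p a (c i)) (g i) = 0 :=
  stmt5_general φ hsymm hinv hcp p a c g hnull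
end

section
/- Let (π̃₁,…,π̃_m, Ṽ, H̃) and (π̂₁,…,π̂_m, V̂, Ĥ) be two minimal Stinespring dilations of the same symmetric invariant completely positive k-linear map φ : A^k → B(H), where minimality means H̃ = closed span of {π̃₁(a₁)⋯π̃_m(a_m) Ṽ h : a_p ∈ A, h ∈ H}, and similarly for Ĥ. Then there is a unitary U : H̃ → Ĥ with U Ṽ = V̂ and U π̃₁(a₁)⋯π̃_m(a_m) = π̂₁(a₁)⋯π̂_m(a_m) U for all a₁,…,a_m ∈ A. -/
/-!
For a Stinespring dilation `(π, V)` of `φ`, the Gram matrix of the vectors `π₁(a₁)⋯π_m(a_m) V h`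
is `⟨φ(b_m*,…,b₁*a₁,…,a_m) g, h⟩`, which depends on `φ` alone. So the two dilations produce
families of vectors with the same Gram matrix, each spanning a dense subspace; matching them
extends to a unitary `U`, which sends `V₁ h` to `V₂ h` (take all `a_p = 1`) and intertwines the
products because `π(a) π(b) V h = π(ab) V h` on both sides.
-/

open scoped ComplexOrder

variable {A : Type*} [Ring A] [StarRing A] [Algebra ℂ A] [StarModule ℂ A]
variable {H : Type*} [NormedAddCommGroup H] [InnerProductSpace ℂ H] [CompleteSpace H]
variable {r : ℕ}

variable {K : Type*} [NormedAddCommGroup K] [InnerProductSpace ℂ K] [CompleteSpace K]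

/-- `π : p ↦ π_p` is a commuting family of unital `*`-homomorphisms `A → B(K)`. -/
def IsRepFamily (π : Fin (r + 1) → A → (K →L[ℂ] K)) : Prop :=
  (∀ p, π p 1 = 1) ∧
  (∀ p a b, π p (a * b) = π p a * π p b) ∧
  (∀ p a b, π p (a + b) = π p a + π p b) ∧
  (∀ (p) (c : ℂ) (a), π p (c • a) = c • π p a) ∧
  (∀ p a, π p (star a) = star (π p a)) ∧
  (∀ p q a b, p ≠ q → Commute (π p a) (π q b))

/-- The product `π₁(a₁)π₂(a₂)⋯π_m(a_m)` (slots indexed by `Fin (r+1)`, `m = r+1`). -/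
noncomputable def dilProd (π : Fin (r + 1) → A → (K →L[ℂ] K)) (a : Fin (r + 1) → A) :
    K →L[ℂ] K :=
  (List.ofFn fun p => π p (a p)).prod

/-- The operator `π₁(a_m)π₂(a_{m−1}a_{m+1})⋯π_m(a₁a_{2m−1})`, where the `(2m−1)`-tuple
`(a₁,…,a_{2m−1})` is encoded as `x = (a₁,…,a_{m−1})`, `y = a_m`, `z = (a_{m+1},…,a_{2m−1})`. -/
noncomputable def dilOp (π : Fin (r + 1) → A → (K →L[ℂ] K))
    (x : Fin r → A) (y : A) (z : Fin r → A) : K →L[ℂ] K :=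
  π 0 y * (List.ofFn fun i : Fin r => π i.succ (x i.rev * z i)).prod

/-- `(π, V, K)` is a Stinespring dilation of the `(2m−1)`-linear map `φ`:  `V` is a
contraction and `φ(a₁,…,a_{2m−1}) = V* π₁(a_m)π₂(a_{m−1}a_{m+1})⋯π_m(a₁a_{2m−1}) V`. -/
def IsDilation (φ : (Fin r → A) → A → (Fin r → A) → (H →L[ℂ] H))
    (π : Fin (r + 1) → A → (K →L[ℂ] K)) (V : H →L[ℂ] K) : Prop :=
  ‖V‖ ≤ 1 ∧ ∀ x y z, φ x y z = ContinuousLinearMap.adjoint V ∘L (dilOp π x y z ∘L V)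

/-- Minimality: `K` is the closed span of `{π₁(a₁)⋯π_m(a_m) V h}`. -/
def IsMinimalDil (π : Fin (r + 1) → A → (K →L[ℂ] K)) (V : H →L[ℂ] K) : Prop :=
  (Submodule.span ℂ
    {ξ : K | ∃ (a : Fin (r + 1) → A) (h : H), ξ = dilProd π a (V h)}).topologicalClosure = ⊤

/-- `T` lies in the commutant `⋂_p π_p(A)′`. -/
def InCommutant (π : Fin (r + 1) → A → (K →L[ℂ] K)) (T : K →L[ℂ] K) : Prop :=
  ∀ (p : Fin (r + 1)) (a : A), Commute T (π p a)

/-- The map `φ_T(a₁,…,a_{2m−1}) = V* T π₁(a_m)π₂(a_{m−1}a_{m+1})⋯π_m(a₁a_{2m−1}) V`. -/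
noncomputable def phiT (π : Fin (r + 1) → A → (K →L[ℂ] K)) (V : H →L[ℂ] K)
    (T : K →L[ℂ] K) (x : Fin r → A) (y : A) (z : Fin r → A) : H →L[ℂ] H :=
  ContinuousLinearMap.adjoint V ∘L ((T ∘L dilOp π x y z) ∘L V)

theorem Finsupp.denseRange_linearCombination {R M ι : Type*} [Semiring R] [AddCommMonoid M]
    [Module R M] [TopologicalSpace M] [ContinuousAdd M] [ContinuousConstSMul R M] {v : ι → M}
    (hv : (Submodule.span R (Set.range v)).topologicalClosure = ⊤) :
    DenseRange (Finsupp.linearCombination R v) := by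
  rwa [DenseRange, ← LinearMap.coe_range, Finsupp.range_linearCombination,
    Submodule.dense_iff_topologicalClosure_eq_top]

section InnerProductSpace

variable {𝕜 ι E F : Type*} [RCLike 𝕜] [NormedAddCommGroup E] [InnerProductSpace 𝕜 E]
  [NormedAddCommGroup F] [InnerProductSpace 𝕜 F]

theorem inner_linearCombination_eq_of_inner_eq {v : ι → E} {w : ι → F}
    (h : ∀ i j, inner 𝕜 (v i) (v j) = inner 𝕜 (w i) (w j)) (c d : ι →₀ 𝕜) :
    inner 𝕜 (Finsupp.linearCombination 𝕜 v c) (Finsupp.linearCombination 𝕜 v d) =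
      inner 𝕜 (Finsupp.linearCombination 𝕜 w c) (Finsupp.linearCombination 𝕜 w d) := by
  simp only [Finsupp.linearCombination_apply, Finsupp.sum, sum_inner, inner_sum,
    inner_smul_left, inner_smul_right, h]

theorem exists_linearIsometryEquiv_of_inner_eq [CompleteSpace E] [CompleteSpace F]
    {v : ι → E} {w : ι → F}
    (hv : (Submodule.span 𝕜 (Set.range v)).topologicalClosure = ⊤)
    (hw : (Submodule.span 𝕜 (Set.range w)).topologicalClosure = ⊤)
    (h : ∀ i j, inner 𝕜 (v i) (v j) = inner 𝕜 (w i) (w j)) :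
    ∃ U : E ≃ₗᵢ[𝕜] F, ∀ i, U (v i) = w i := by
  have hnorm (c : ι →₀ 𝕜) :
      ‖Finsupp.linearCombination 𝕜 w c‖ = ‖Finsupp.linearCombination 𝕜 v c‖ := by
    rw [norm_eq_sqrt_re_inner (𝕜 := 𝕜), norm_eq_sqrt_re_inner (𝕜 := 𝕜),
      inner_linearCombination_eq_of_inner_eq h]
  have hv' := Finsupp.denseRange_linearCombination hv
  have hw' := Finsupp.denseRange_linearCombination hw
  refine ⟨(LinearEquiv.refl 𝕜 (ι →₀ 𝕜)).extendOfIsometry _ _ hv' hw' hnorm, fun i => ?_⟩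
  simpa using (LinearEquiv.refl 𝕜 (ι →₀ 𝕜)).extendOfIsometry_eq _ _ hv' hw' hnorm
    (Finsupp.single i 1)

end InnerProductSpace

namespace List

variable {M : Type*} [Monoid M]

theorem prod_ofFn_mul_prod_ofFn_of_commute {n : ℕ} (f g : Fin n → M)
    (hfg : ∀ p q, p ≠ q → Commute (f p) (g q)) :
    (ofFn f).prod * (ofFn g).prod = (ofFn fun p => f p * g p).prod := by
  induction n with
  | zero => simp
  | succ n ih =>
    have hcomm : Commute (ofFn fun i : Fin n => f i.succ).prod (g 0) :=
      Commute.list_prod_left _ _ fun x hx => by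
        obtain ⟨i, rfl⟩ := mem_ofFn.mp hx
        exact hfg i.succ 0 (Fin.succ_ne_zero i)
    simp only [ofFn_succ, prod_cons]
    rw [← ih (fun i => f i.succ) (fun i => g i.succ)
      fun p q hpq => hfg p.succ q.succ (Fin.succ_injective _ |>.ne hpq)]
    rw [mul_assoc, ← mul_assoc (ofFn fun i => f i.succ).prod, hcomm.eq]
    simp only [mul_assoc]

theorem star_prod_ofFn_of_commute [StarMul M] {n : ℕ} (f : Fin n → M)
    (hf : ∀ p q, p ≠ q → Commute (f p) (f q)) :
    star (ofFn f).prod = (ofFn fun p => star (f p)).prod := by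
  induction n with
  | zero => simp
  | succ n ih =>
    have hcomm : Commute (ofFn fun i : Fin n => star (f i.succ)).prod (star (f 0)) :=
      Commute.list_prod_left _ _ fun x hx => by
        obtain ⟨i, rfl⟩ := mem_ofFn.mp hx
        exact (hf i.succ 0 (Fin.succ_ne_zero i)).star_star
    rw [ofFn_succ, ofFn_succ, prod_cons, prod_cons, star_mul,
      ih (fun i => f i.succ) fun p q hpq => hf p.succ q.succ (Fin.succ_injective _ |>.ne hpq)]
    exact hcomm.eq

end List

section Dilation

variable {A H K : Type*} [NormedAddCommGroup H] [InnerProductSpace ℂ H]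
  [NormedAddCommGroup K] [InnerProductSpace ℂ K] {r : ℕ} {π : Fin (r + 1) → A → (K →L[ℂ] K)}

theorem IsMinimalDil.topologicalClosure_span_range {V : H →L[ℂ] K} (hmin : IsMinimalDil π V) :
    (Submodule.span ℂ (Set.range fun x : (Fin (r + 1) → A) × H => dilProd π x.1 (V x.2))
      ).topologicalClosure = ⊤ := by
  refine (congrArg (fun s => (Submodule.span ℂ s).topologicalClosure) ?_).trans hmin
  ext ξ
  simp [eq_comm]

variable [Ring A] [StarRing A] [Algebra ℂ A] [CompleteSpace K]

theorem dilProd_mul (hπ : IsRepFamily π) (a b : Fin (r + 1) → A) :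
    dilProd π a * dilProd π b = dilProd π (a * b) := by
  rw [dilProd, dilProd, List.prod_ofFn_mul_prod_ofFn_of_commute _ _
    fun p q hpq => hπ.2.2.2.2.2 p q _ _ hpq]
  simp only [dilProd, Pi.mul_apply, hπ.2.1]

theorem star_dilProd (hπ : IsRepFamily π) (a : Fin (r + 1) → A) :
    star (dilProd π a) = dilProd π (star a) := by
  rw [dilProd, List.star_prod_ofFn_of_commute _ fun p q hpq => hπ.2.2.2.2.2 p q _ _ hpq]
  simp only [dilProd, Pi.star_apply, hπ.2.2.2.2.1]

theorem dilProd_one (hπ : IsRepFamily π) : dilProd π 1 = 1 :=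
  List.prod_eq_one fun x hx => by
    obtain ⟨p, rfl⟩ := List.mem_ofFn.mp hx
    exact hπ.1 p

theorem adjoint_dilProd_comp_dilProd (hπ : IsRepFamily π) (a b : Fin (r + 1) → A) :
    ContinuousLinearMap.adjoint (dilProd π a) ∘L dilProd π b =
      dilOp π (fun i => star (a i.rev.succ)) (star (a 0) * b 0) (fun i => b i.succ) := by
  change star (dilProd π a) * dilProd π b = _
  rw [star_dilProd hπ, dilProd_mul hπ, dilProd, dilOp, List.ofFn_succ, List.prod_cons]
  simp only [Pi.mul_apply, Pi.star_apply, Fin.rev_rev]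

theorem inner_dilProd_apply_dilProd_apply {φ : (Fin r → A) → A → (Fin r → A) → (H →L[ℂ] H)}
    [CompleteSpace H] {V : H →L[ℂ] K} (hπ : IsRepFamily π) (hdil : IsDilation φ π V)
    (a : Fin (r + 1) → A) (g : H) (b : Fin (r + 1) → A) (h : H) :
    inner ℂ (dilProd π a (V g)) (dilProd π b (V h)) = gram φ b h a g := by
  rw [← ContinuousLinearMap.adjoint_inner_right, ← ContinuousLinearMap.comp_apply,
    adjoint_dilProd_comp_dilProd hπ, ← ContinuousLinearMap.adjoint_inner_right, gram,
    hdil.2]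
  rfl

end Dilation

theorem stmt10_general (φ : (Fin r → A) → A → (Fin r → A) → (H →L[ℂ] H))
    {K₁ K₂ : Type*} [NormedAddCommGroup K₁] [InnerProductSpace ℂ K₁] [CompleteSpace K₁]
    [NormedAddCommGroup K₂] [InnerProductSpace ℂ K₂] [CompleteSpace K₂]
    (π₁ : Fin (r + 1) → A → (K₁ →L[ℂ] K₁)) (V₁ : H →L[ℂ] K₁)
    (π₂ : Fin (r + 1) → A → (K₂ →L[ℂ] K₂)) (V₂ : H →L[ℂ] K₂)
    (hrep₁ : IsRepFamily π₁) (hdil₁ : IsDilation φ π₁ V₁) (hmin₁ : IsMinimalDil π₁ V₁)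
    (hrep₂ : IsRepFamily π₂) (hdil₂ : IsDilation φ π₂ V₂) (hmin₂ : IsMinimalDil π₂ V₂) :
    ∃ U : K₁ ≃ₗᵢ[ℂ] K₂,
      (∀ h : H, U (V₁ h) = V₂ h) ∧
      (∀ (a : Fin (r + 1) → A) (ξ : K₁), U (dilProd π₁ a ξ) = dilProd π₂ a (U ξ)) := by
  obtain ⟨U, hU⟩ := exists_linearIsometryEquiv_of_inner_eq
    hmin₁.topologicalClosure_span_range hmin₂.topologicalClosure_span_range fun x y => by
      rw [inner_dilProd_apply_dilProd_apply hrep₁ hdil₁,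
        inner_dilProd_apply_dilProd_apply hrep₂ hdil₂]
  refine ⟨U, fun h => ?_, fun a => ?_⟩
  · simpa [dilProd_one hrep₁, dilProd_one hrep₂] using hU (1, h)
  · have hdense := Submodule.dense_iff_topologicalClosure_eq_top.mpr
      hmin₁.topologicalClosure_span_range
    have hintertwine : U.toLinearIsometry.toContinuousLinearMap ∘L dilProd π₁ a =
        dilProd π₂ a ∘L U.toLinearIsometry.toContinuousLinearMap := by
      refine ContinuousLinearMap.ext_on hdense ?_
      rintro _ ⟨⟨b, h⟩, rfl⟩
      calc U (dilProd π₁ a (dilProd π₁ b (V₁ h)))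
          = U (dilProd π₁ (a * b) (V₁ h)) := by rw [← dilProd_mul hrep₁]; rfl
        _ = dilProd π₂ (a * b) (V₂ h) := hU (a * b, h)
        _ = dilProd π₂ a (U (dilProd π₁ b (V₁ h))) := by
          rw [← dilProd_mul hrep₂, hU (b, h)]; rfl
    exact fun ξ => congr($hintertwine ξ)

/-- Uniqueness of minimal Stinespring dilations: if `(π̃, Ṽ, K₁)` and `(π̂, V̂, K₂)` are two
minimal Stinespring dilations of the same symmetric invariant completely positive
`(2m−1)`-linear map `φ`, then there is a unitary `U : K₁ → K₂` with `U Ṽ = V̂` and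
`U π̃₁(a₁)⋯π̃_m(a_m) = π̂₁(a₁)⋯π̂_m(a_m) U`. -/
theorem stmt10 (φ : (Fin r → A) → A → (Fin r → A) → (H →L[ℂ] H))
    (hlin : IsMultilinearOdd φ) (hsymm : IsSymmMapOdd φ)
    (hinv : IsInvariantOdd φ) (hcp : IsCPOdd φ)
    {K₁ K₂ : Type*} [NormedAddCommGroup K₁] [InnerProductSpace ℂ K₁] [CompleteSpace K₁]
    [NormedAddCommGroup K₂] [InnerProductSpace ℂ K₂] [CompleteSpace K₂]
    (π₁ : Fin (r + 1) → A → (K₁ →L[ℂ] K₁)) (V₁ : H →L[ℂ] K₁)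
    (π₂ : Fin (r + 1) → A → (K₂ →L[ℂ] K₂)) (V₂ : H →L[ℂ] K₂)
    (hrep₁ : IsRepFamily π₁) (hdil₁ : IsDilation φ π₁ V₁) (hmin₁ : IsMinimalDil π₁ V₁)
    (hrep₂ : IsRepFamily π₂) (hdil₂ : IsDilation φ π₂ V₂) (hmin₂ : IsMinimalDil π₂ V₂) :
    ∃ U : K₁ ≃ₗᵢ[ℂ] K₂,
      (∀ h : H, U (V₁ h) = V₂ h) ∧
      (∀ (a : Fin (r + 1) → A) (ξ : K₁), U (dilProd π₁ a ξ) = dilProd π₂ a (U ξ)) :=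
  stmt10_general φ π₁ V₁ π₂ V₂ hrep₁ hdil₁ hmin₁ hrep₂ hdil₂ hmin₂
end

section
/- Let φ₁, φ₂ : A^k → B(H) be symmetric invariant completely positive k-linear maps with minimal Stinespring dilations (π_p^{φᵢ}, V_{φᵢ}, H^{φᵢ}) for i = 1, 2. If φ₂ − φ₁ is completely positive (i.e., φ₁ ≤ φ₂), then there exists a unique contraction T ∈ B(H^{φ₂}, H^{φ₁}) with T V_{φ₂} = V_{φ₁} and T Π_{p=1}^m π_p^{φ₂}(a_p) = Π_{p=1}^m π_p^{φ₁}(a_p) T for all a₁,…,a_m ∈ A. -/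
open scoped ComplexOrder

variable {A : Type*} [Ring A] [StarRing A] [Algebra ℂ A] [StarModule ℂ A]
variable {H : Type*} [NormedAddCommGroup H] [InnerProductSpace ℂ H] [CompleteSpace H]
variable {r : ℕ}

variable {K : Type*} [NormedAddCommGroup K] [InnerProductSpace ℂ K] [CompleteSpace K]

/-!
Since `(π, V)` dilates `φ`, each Gram sum `∑ⱼ ∑ᵢ gram φ (a j) (g j) (a i) (g i)` is the squared
norm of `∑ⱼ π(a j) V (g j)`; so `φ₁ ≤ φ₂` reads
`‖∑ⱼ π₁(a j) V₁ (g j)‖ ≤ ‖∑ⱼ π₂(a j) V₂ (g j)‖`. Hence `π₂(a) V₂ h ↦ π₁(a) V₁ h` extends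
linearly to a contraction on the span of these vectors, which is dense in `K₂` by minimality, and
then continuously to all of `K₂`. Intertwining and uniqueness only need to be checked on that
dense span.
-/

theorem List.prod_ofFn_mul_prod_ofFn_of_commute_s11 {M : Type*} [Monoid M] {n : ℕ}
    (f g : Fin n → M) (hfg : ∀ i j, i ≠ j → Commute (f i) (g j)) :
    (List.ofFn f).prod * (List.ofFn g).prod = (List.ofFn fun i => f i * g i).prod := by
  induction n with
  | zero => simp
  | succ n ih =>
    have hcomm : Commute (List.ofFn fun i : Fin n => f i.succ).prod (g 0) :=
      Commute.list_prod_left _ _ fun x hx => by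
        obtain ⟨i, rfl⟩ := List.mem_ofFn.mp hx
        exact hfg i.succ 0 (Fin.succ_ne_zero i)
    simp only [List.ofFn_succ, List.prod_cons]
    rw [← ih _ _ fun i j hij => hfg i.succ j.succ (Fin.succ_injective _ |>.ne hij),
      mul_assoc, ← mul_assoc _ (g 0), hcomm.eq]
    simp only [mul_assoc]

theorem List.star_prod_ofFn_of_commute_s11 {M : Type*} [Monoid M] [StarMul M] {n : ℕ}
    (f : Fin n → M) (hf : ∀ i j, i ≠ j → Commute (f i) (f j)) :
    star (List.ofFn f).prod = (List.ofFn fun i => star (f i)).prod := by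
  induction n with
  | zero => simp
  | succ n ih =>
    simp only [List.ofFn_succ, List.prod_cons, star_mul]
    rw [ih _ fun i j hij => hf i.succ j.succ (Fin.succ_injective _ |>.ne hij)]
    exact Commute.list_prod_left _ _ fun x hx => by
      obtain ⟨i, rfl⟩ := List.mem_ofFn.mp hx
      exact (hf i.succ 0 (Fin.succ_ne_zero i)).star_star

omit [Algebra ℂ A] [StarModule ℂ A] [CompleteSpace K] in
theorem dilProd_star_mul_eq_dilOp (π : Fin (r + 1) → A → (K →L[ℂ] K))
    (a b : Fin (r + 1) → A) :
    dilProd π (fun p => star (b p) * a p) =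
      dilOp π (fun i => star (b i.rev.succ)) (star (b 0) * a 0) (fun i => a i.succ) := by
  simp only [dilProd, dilOp, List.ofFn_succ, List.prod_cons, Fin.rev_rev]

namespace IsRepFamily

variable {π : Fin (r + 1) → A → (K →L[ℂ] K)} (hπ : IsRepFamily π)
include hπ
omit [StarModule ℂ A]

theorem dilProd_mul (a b : Fin (r + 1) → A) :
    dilProd π a * dilProd π b = dilProd π (fun p => a p * b p) := by
  rw [dilProd, dilProd, List.prod_ofFn_mul_prod_ofFn_of_commute_s11 _ _
    fun p q hpq => hπ.2.2.2.2.2 p q _ _ hpq]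
  simp only [dilProd, hπ.2.1]

theorem dilProd_apply_dilProd (a b : Fin (r + 1) → A) (ξ : K) :
    dilProd π a (dilProd π b ξ) = dilProd π (fun p => a p * b p) ξ := by
  rw [← hπ.dilProd_mul]
  rfl

theorem adjoint_dilProd (a : Fin (r + 1) → A) :
    ContinuousLinearMap.adjoint (dilProd π a) = dilProd π (fun p => star (a p)) := by
  rw [← ContinuousLinearMap.star_eq_adjoint, dilProd, List.star_prod_ofFn_of_commute_s11 _
    fun p q hpq => hπ.2.2.2.2.2 p q _ _ hpq]
  simp only [dilProd, hπ.2.2.2.2.1]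

theorem dilProd_one : dilProd π (fun _ => (1 : A)) = 1 :=
  List.prod_eq_one fun x hx => by
    obtain ⟨p, rfl⟩ := List.mem_ofFn.mp hx
    exact hπ.1 p

end IsRepFamily

namespace IsDilation

variable {φ : (Fin r → A) → A → (Fin r → A) → (H →L[ℂ] H)}
  {π : Fin (r + 1) → A → (K →L[ℂ] K)} {V : H →L[ℂ] K}
omit [StarModule ℂ A]

theorem inner_dilProd (hdil : IsDilation φ π V) (hπ : IsRepFamily π)
    (a : Fin (r + 1) → A) (g : H) (b : Fin (r + 1) → A) (h : H) :
    inner ℂ (dilProd π b (V h)) (dilProd π a (V g)) = gram φ a g b h := by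
  rw [← ContinuousLinearMap.adjoint_inner_right, hπ.adjoint_dilProd, hπ.dilProd_apply_dilProd,
    dilProd_star_mul_eq_dilOp, ← ContinuousLinearMap.adjoint_inner_right, gram, hdil.2]
  rfl

theorem sum_gram_eq_norm_sq (hdil : IsDilation φ π V) (hπ : IsRepFamily π)
    {n : ℕ} (a : Fin n → Fin (r + 1) → A) (g : Fin n → H) :
    ∑ j, ∑ i, gram φ (a j) (g j) (a i) (g i) = (‖∑ j, dilProd π (a j) (V (g j))‖ : ℂ) ^ 2 := by
  simp_rw [← hdil.inner_dilProd hπ, ← sum_inner, ← inner_sum, inner_self_eq_norm_sq_to_K]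
  rfl

end IsDilation

theorem Finsupp.linearCombination_eq_sum_fin {R ι M : Type*} [Semiring R] [AddCommMonoid M]
    [Module R M] (v : ι → M) (w : ι →₀ R) :
    Finsupp.linearCombination R v w =
      ∑ j, w (w.support.equivFin.symm j) • v (w.support.equivFin.symm j) := by
  rw [Finsupp.linearCombination_apply, Finsupp.sum, ← Finset.sum_coe_sort,
    ← Equiv.sum_comp w.support.equivFin.symm]

theorem ContinuousLinearMap.exists_norm_le_one_of_norm_sum_le {𝕜 ι E F : Type*}
    [NontriviallyNormedField 𝕜] [SeminormedAddCommGroup E] [NormedSpace 𝕜 E]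
    [NormedAddCommGroup F] [NormedSpace 𝕜 F] [CompleteSpace F] {u : ι → E} {v : ι → F}
    (hu : Dense (Submodule.span 𝕜 (Set.range u) : Set E))
    (hle : ∀ (n : ℕ) (i : Fin n → ι) (c : Fin n → 𝕜),
      ‖∑ j, c j • v (i j)‖ ≤ ‖∑ j, c j • u (i j)‖) :
    ∃ T : E →L[𝕜] F, ‖T‖ ≤ 1 ∧ ∀ i, T (u i) = v i := by
  have hdense : DenseRange (Finsupp.linearCombination 𝕜 u) := by
    rwa [DenseRange, ← LinearMap.coe_range, Finsupp.range_linearCombination]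
  have hnorm : ∀ w : ι →₀ 𝕜,
      ‖Finsupp.linearCombination 𝕜 v w‖ ≤ 1 * ‖Finsupp.linearCombination 𝕜 u w‖ := fun w => by
    simpa only [Finsupp.linearCombination_eq_sum_fin, one_mul] using hle _ _ _
  refine ⟨(Finsupp.linearCombination 𝕜 v).extendOfNorm (Finsupp.linearCombination 𝕜 u),
    LinearMap.opNorm_extendOfNorm_le hdense zero_le_one hnorm, fun i => ?_⟩
  simpa using LinearMap.extendOfNorm_eq hdense ⟨1, hnorm⟩ (Finsupp.single i 1)

omit [Ring A] [StarRing A] [Algebra ℂ A] [StarModule ℂ A] [CompleteSpace H] [CompleteSpace K] in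
theorem IsMinimalDil.dense_span_range {π : Fin (r + 1) → A → (K →L[ℂ] K)} {V : H →L[ℂ] K}
    (hmin : IsMinimalDil π V) :
    Dense (Submodule.span ℂ (Set.range fun x : (Fin (r + 1) → A) × H => dilProd π x.1 (V x.2))
      : Set K) := by
  have hrange : (Set.range fun x : (Fin (r + 1) → A) × H => dilProd π x.1 (V x.2)) =
      {ξ : K | ∃ (a : Fin (r + 1) → A) (h : H), ξ = dilProd π a (V h)} := by
    ext ξ
    simp [eq_comm]
  rw [hrange]
  exact Submodule.dense_iff_topologicalClosure_eq_top.mpr hmin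

section TwoDilations

variable {K₁ K₂ : Type*} [NormedAddCommGroup K₁] [InnerProductSpace ℂ K₁] [CompleteSpace K₁]
    [NormedAddCommGroup K₂] [InnerProductSpace ℂ K₂] [CompleteSpace K₂]
omit [StarModule ℂ A]

theorem norm_sum_dilProd_le_of_le {φ₁ φ₂ : (Fin r → A) → A → (Fin r → A) → (H →L[ℂ] H)}
    {π₁ : Fin (r + 1) → A → (K₁ →L[ℂ] K₁)} {V₁ : H →L[ℂ] K₁}
    {π₂ : Fin (r + 1) → A → (K₂ →L[ℂ] K₂)} {V₂ : H →L[ℂ] K₂}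
    (hrep₁ : IsRepFamily π₁) (hdil₁ : IsDilation φ₁ π₁ V₁)
    (hrep₂ : IsRepFamily π₂) (hdil₂ : IsDilation φ₂ π₂ V₂)
    (hle : ∀ (n : ℕ) (a : Fin n → Fin (r + 1) → A) (g : Fin n → H),
      0 ≤ ∑ j, ∑ i,
        (gram φ₂ (a j) (g j) (a i) (g i) - gram φ₁ (a j) (g j) (a i) (g i)))
    {n : ℕ} (a : Fin n → Fin (r + 1) → A) (g : Fin n → H) :
    ‖∑ j, dilProd π₁ (a j) (V₁ (g j))‖ ≤ ‖∑ j, dilProd π₂ (a j) (V₂ (g j))‖ := by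
  have hsq := hle n a g
  simp only [Finset.sum_sub_distrib, hdil₁.sum_gram_eq_norm_sq hrep₁,
    hdil₂.sum_gram_eq_norm_sq hrep₂, sub_nonneg] at hsq
  exact (pow_le_pow_iff_left₀ (norm_nonneg _) (norm_nonneg _) two_ne_zero).mp
    (mod_cast hsq)

end TwoDilations

theorem stmt11_general (φ₁ φ₂ : (Fin r → A) → A → (Fin r → A) → (H →L[ℂ] H))
    (hle : ∀ (n : ℕ) (a : Fin n → Fin (r + 1) → A) (g : Fin n → H),
      0 ≤ ∑ j, ∑ i,
        (gram φ₂ (a j) (g j) (a i) (g i) - gram φ₁ (a j) (g j) (a i) (g i)))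
    {K₁ K₂ : Type*} [NormedAddCommGroup K₁] [InnerProductSpace ℂ K₁] [CompleteSpace K₁]
    [NormedAddCommGroup K₂] [InnerProductSpace ℂ K₂] [CompleteSpace K₂]
    (π₁ : Fin (r + 1) → A → (K₁ →L[ℂ] K₁)) (V₁ : H →L[ℂ] K₁)
    (π₂ : Fin (r + 1) → A → (K₂ →L[ℂ] K₂)) (V₂ : H →L[ℂ] K₂)
    (hrep₁ : IsRepFamily π₁) (hdil₁ : IsDilation φ₁ π₁ V₁)
    (hrep₂ : IsRepFamily π₂) (hdil₂ : IsDilation φ₂ π₂ V₂) (hmin₂ : IsMinimalDil π₂ V₂) :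
    ∃! T : K₂ →L[ℂ] K₁,
      ‖T‖ ≤ 1 ∧ (∀ h : H, T (V₂ h) = V₁ h) ∧
      (∀ (a : Fin (r + 1) → A) (ξ : K₂), T (dilProd π₂ a ξ) = dilProd π₁ a (T ξ)) := by
  have hdense := hmin₂.dense_span_range
  obtain ⟨T, hT, hTgen⟩ := ContinuousLinearMap.exists_norm_le_one_of_norm_sum_le
    (v := fun x : (Fin (r + 1) → A) × H => dilProd π₁ x.1 (V₁ x.2)) hdense fun n i c => by
      simpa only [map_smul] using norm_sum_dilProd_le_of_le hrep₁ hdil₁ hrep₂ hdil₂ hle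
        (fun j => (i j).1) (fun j => c j • (i j).2)
  simp only [Prod.forall] at hTgen
  have hTV (h : H) : T (V₂ h) = V₁ h := by
    simpa [hrep₁.dilProd_one, hrep₂.dilProd_one] using hTgen (fun _ => 1) h
  refine ⟨T, ⟨hT, hTV, fun a => DFunLike.congr_fun (?_ : T ∘L dilProd π₂ a = dilProd π₁ a ∘L T)⟩,
    fun T' ⟨_, hT'V, hT'comm⟩ => ?_⟩
  · refine ContinuousLinearMap.ext_on hdense ?_
    rintro _ ⟨⟨b, h⟩, rfl⟩
    simp only [ContinuousLinearMap.comp_apply, hrep₂.dilProd_apply_dilProd, hTgen,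
      hrep₁.dilProd_apply_dilProd]
  · refine ContinuousLinearMap.ext_on hdense ?_
    rintro _ ⟨⟨a, h⟩, rfl⟩
    simp only [hT'comm, hT'V, hTgen]

/-- If `φ₁ ≤ φ₂` (i.e. `φ₂ − φ₁` is completely positive) for symmetric invariant completely
positive `(2m−1)`-linear maps with minimal Stinespring dilations `(π_p^{φᵢ}, V_{φᵢ}, K_i)`,
then there is a unique contraction `T : K₂ → K₁` with `T V_{φ₂} = V_{φ₁}` and
`T Π_p π_p^{φ₂}(a_p) = Π_p π_p^{φ₁}(a_p) T`. -/
theorem stmt11 (φ₁ φ₂ : (Fin r → A) → A → (Fin r → A) → (H →L[ℂ] H))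
    (hlin₁ : IsMultilinearOdd φ₁) (hsymm₁ : IsSymmMapOdd φ₁)
    (hinv₁ : IsInvariantOdd φ₁) (hcp₁ : IsCPOdd φ₁)
    (hlin₂ : IsMultilinearOdd φ₂) (hsymm₂ : IsSymmMapOdd φ₂)
    (hinv₂ : IsInvariantOdd φ₂) (hcp₂ : IsCPOdd φ₂)
    (hle : ∀ (n : ℕ) (a : Fin n → Fin (r + 1) → A) (g : Fin n → H),
      0 ≤ ∑ j, ∑ i,
        (gram φ₂ (a j) (g j) (a i) (g i) - gram φ₁ (a j) (g j) (a i) (g i)))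
    {K₁ K₂ : Type*} [NormedAddCommGroup K₁] [InnerProductSpace ℂ K₁] [CompleteSpace K₁]
    [NormedAddCommGroup K₂] [InnerProductSpace ℂ K₂] [CompleteSpace K₂]
    (π₁ : Fin (r + 1) → A → (K₁ →L[ℂ] K₁)) (V₁ : H →L[ℂ] K₁)
    (π₂ : Fin (r + 1) → A → (K₂ →L[ℂ] K₂)) (V₂ : H →L[ℂ] K₂)
    (hrep₁ : IsRepFamily π₁) (hdil₁ : IsDilation φ₁ π₁ V₁) (hmin₁ : IsMinimalDil π₁ V₁)
    (hrep₂ : IsRepFamily π₂) (hdil₂ : IsDilation φ₂ π₂ V₂) (hmin₂ : IsMinimalDil π₂ V₂) :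
    ∃! T : K₂ →L[ℂ] K₁,
      ‖T‖ ≤ 1 ∧ (∀ h : H, T (V₂ h) = V₁ h) ∧
      (∀ (a : Fin (r + 1) → A) (ξ : K₂), T (dilProd π₂ a ξ) = dilProd π₁ a (T ξ)) :=
  stmt11_general φ₁ φ₂ hle π₁ V₁ π₂ V₂ hrep₁ hdil₁ hrep₂ hdil₂ hmin₂
end

section
/- Let (π₁,…,π_m, V, K) be a minimal Stinespring dilation of a symmetric invariant completely positive (2m−1)-linear map φ : A^{2m−1} → B(H). For T in the commutant ⋂_{p=1}^m π_p(A)′ ⊆ B(K), define φ_T(a₁,…,a_{2m−1}) = V* T π₁(a_m) π₂(a_{m−1}a_{m+1}) ⋯ π_m(a₁a_{2m−1}) V. Then the map T ↦ φ_T is linear and injective. -/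
/-
Testing `φ_T` on the `(2m−1)`-tuple `(b_m*,…,b₂*, b₁*a₁, a₂,…,a_m)` gives
`V* T π(b)* π(a) V` with `π(a) = π₁(a₁)⋯π_m(a_m)`, because the `π_p` are commuting
`*`-homomorphisms and `T` commutes with all of them.  Hence `⟨T π(a) V h, π(b) V g⟩` is
determined by `φ_T`, and by minimality these vectors span a dense subspace of `K`.
-/

open scoped ComplexOrder

variable {A : Type*} [Ring A] [StarRing A] [Algebra ℂ A] [StarModule ℂ A]
variable {H : Type*} [NormedAddCommGroup H] [InnerProductSpace ℂ H] [CompleteSpace H]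
variable {r : ℕ}

variable {K : Type*} [NormedAddCommGroup K] [InnerProductSpace ℂ K] [CompleteSpace K]

theorem star_prod_ofFn_mul_prod_ofFn {R M : Type*} [Mul R] [Star R] [Monoid M] [StarMul M]
    {n : ℕ} (ρ : Fin n → R → M) (hmul : ∀ p a b, ρ p (a * b) = ρ p a * ρ p b)
    (hstar : ∀ p a, ρ p (star a) = star (ρ p a))
    (hcomm : ∀ p q a b, p ≠ q → Commute (ρ p a) (ρ q b)) (a b : Fin n → R) :
    star (List.ofFn fun p => ρ p (b p)).prod * (List.ofFn fun p => ρ p (a p)).prod =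
      (List.ofFn fun p => ρ p (star (b p) * a p)).prod := by
  induction n with
  | zero => simp
  | succ n ih =>
    simp only [List.ofFn_succ, List.prod_cons]
    set Rb := (List.ofFn fun i : Fin n => ρ i.succ (b i.succ)).prod
    set Ra := (List.ofFn fun i : Fin n => ρ i.succ (a i.succ)).prod
    have hcomm_Rb (c : R) : Commute (ρ 0 c) (star Rb) := by
      have : Commute (ρ 0 (star c)) Rb := Commute.list_prod_right _ _ fun x hx => by
        obtain ⟨i, rfl⟩ := List.mem_ofFn.mp hx
        exact hcomm 0 i.succ _ _ (Fin.succ_ne_zero i).symm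
      simpa [hstar] using this.star_star
    have htail := ih (fun i => ρ i.succ) (fun _ => hmul _) (fun _ => hstar _)
      (fun p q a b hpq => hcomm p.succ q.succ a b (Fin.succ_injective _ |>.ne hpq))
      (fun i => a i.succ) (fun i => b i.succ)
    calc star (ρ 0 (b 0) * Rb) * (ρ 0 (a 0) * Ra)
        = star Rb * ρ 0 (star (b 0) * a 0) * Ra := by
          rw [star_mul, ← hstar, hmul]; simp only [mul_assoc]
      _ = _ := by rw [← (hcomm_Rb _).eq, mul_assoc, htail]

theorem ContinuousLinearMap.eq_zero_of_inner_eq_zero_on_dense_span {𝕜 E : Type*} [RCLike 𝕜]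
    [NormedAddCommGroup E] [InnerProductSpace 𝕜 E] {s : Set E}
    (hs : Dense (Submodule.span 𝕜 s : Set E)) {S : E →L[𝕜] E}
    (h : ∀ u ∈ s, ∀ v ∈ s, inner 𝕜 u (S v) = 0) : S = 0 := by
  refine ContinuousLinearMap.ext_on hs fun v hv => ?_
  have horth : innerSL 𝕜 (S v) = 0 := ContinuousLinearMap.ext_on hs fun u hu => by
    rw [innerSL_apply_apply, ← inner_conj_symm, h u hu v hv, map_zero, zero_apply]
  simpa using congrArg (· (S v)) horth

section Dilation

variable {π : Fin (r + 1) → A → (K →L[ℂ] K)} {V : H →L[ℂ] K}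

omit [Ring A] [StarRing A] [Algebra ℂ A] [StarModule ℂ A] [CompleteSpace H] [CompleteSpace K] in
theorem IsMinimalDil.dense (hmin : IsMinimalDil π V) :
    Dense (Submodule.span ℂ
      {ξ : K | ∃ (a : Fin (r + 1) → A) (h : H), ξ = dilProd π a (V h)} : Set K) :=
  Submodule.dense_iff_topologicalClosure_eq_top.mpr hmin

omit [StarModule ℂ A] in
theorem IsRepFamily.star_dilProd_mul_dilProd (hrep : IsRepFamily π) (a b : Fin (r + 1) → A) :
    star (dilProd π b) * dilProd π a = dilProd π (fun p => star (b p) * a p) := by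
  obtain ⟨-, hmul, -, -, hstar, hcomm⟩ := hrep
  exact star_prod_ofFn_mul_prod_ofFn π hmul hstar hcomm a b

omit [StarModule ℂ A] in
theorem InCommutant.commute_star_dilProd (hrep : IsRepFamily π) {T : K →L[ℂ] K}
    (hT : InCommutant π T) (c : Fin (r + 1) → A) : Commute T (star (dilProd π c)) := by
  obtain ⟨-, -, -, -, hstar, -⟩ := hrep
  have : Commute (star T) (dilProd π c) := Commute.list_prod_right _ _ fun x hx => by
    obtain ⟨p, rfl⟩ := List.mem_ofFn.mp hx
    simpa [hstar] using (hT p (star (c p))).star_star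
  simpa using this.star_star

omit [Algebra ℂ A] [StarModule ℂ A] [CompleteSpace K] in
theorem dilOp_eq_dilProd (a b : Fin (r + 1) → A) :
    dilOp π (fun i => star (b i.rev.succ)) (star (b 0) * a 0) (fun i => a i.succ) =
      dilProd π (fun p => star (b p) * a p) := by
  rw [dilOp, dilProd, List.ofFn_succ, List.prod_cons]
  simp only [Fin.rev_rev]

omit [StarModule ℂ A] in
theorem inner_dilProd_apply_dilProd (hrep : IsRepFamily π) {T : K →L[ℂ] K}
    (hT : InCommutant π T) (a b : Fin (r + 1) → A) (g h : H) :
    inner ℂ (dilProd π b (V g)) (T (dilProd π a (V h))) =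
      inner ℂ g (phiT π V T (fun i => star (b i.rev.succ)) (star (b 0) * a 0)
        (fun i => a i.succ) h) := by
  have hop : star (dilProd π b) * T * dilProd π a = T * dilProd π (fun p => star (b p) * a p) :=
    by rw [← (hT.commute_star_dilProd hrep b).eq, mul_assoc, hrep.star_dilProd_mul_dilProd]
  rw [← ContinuousLinearMap.adjoint_inner_right, ← ContinuousLinearMap.star_eq_adjoint,
    phiT, ContinuousLinearMap.comp_apply, ContinuousLinearMap.adjoint_inner_right,
    dilOp_eq_dilProd, ← ContinuousLinearMap.mul_def, ← hop]
  rfl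

omit [StarRing A] [Algebra ℂ A] [StarModule ℂ A] in
theorem phiT_add_smul (T₁ T₂ : K →L[ℂ] K) (c : ℂ) (x : Fin r → A) (y : A) (z : Fin r → A) :
    phiT π V (T₁ + c • T₂) x y z = phiT π V T₁ x y z + c • phiT π V T₂ x y z := by
  ext
  simp [phiT]

end Dilation

theorem stmt12_general
    (π : Fin (r + 1) → A → (K →L[ℂ] K)) (V : H →L[ℂ] K)
    (hrep : IsRepFamily π) (hmin : IsMinimalDil π V) :
    (∀ (T₁ T₂ : K →L[ℂ] K) (c : ℂ) (x : Fin r → A) (y : A) (z : Fin r → A),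
        phiT π V (T₁ + c • T₂) x y z = phiT π V T₁ x y z + c • phiT π V T₂ x y z) ∧
    (∀ T₁ T₂ : K →L[ℂ] K, InCommutant π T₁ → InCommutant π T₂ →
        (∀ (x : Fin r → A) (y : A) (z : Fin r → A),
          phiT π V T₁ x y z = phiT π V T₂ x y z) → T₁ = T₂) := by
  refine ⟨phiT_add_smul, fun T₁ T₂ h₁ h₂ heq => ?_⟩
  rw [← sub_eq_zero]
  refine ContinuousLinearMap.eq_zero_of_inner_eq_zero_on_dense_span hmin.dense ?_
  rintro _ ⟨b, g, rfl⟩ _ ⟨a, h, rfl⟩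
  rw [sub_apply, inner_sub_right, inner_dilProd_apply_dilProd hrep h₁,
    inner_dilProd_apply_dilProd hrep h₂, heq, sub_self]

/-- For a minimal Stinespring dilation `(π, V, K)` of a symmetric invariant completely
positive `(2m−1)`-linear map `φ`, the assignment `T ↦ φ_T` (with
`φ_T(a₁,…,a_{2m−1}) = V* T π₁(a_m)π₂(a_{m−1}a_{m+1})⋯π_m(a₁a_{2m−1}) V`) is linear and,
on the commutant `⋂_p π_p(A)′`, injective. -/
theorem stmt12 (φ : (Fin r → A) → A → (Fin r → A) → (H →L[ℂ] H))
    (hlin : IsMultilinearOdd φ) (hsymm : IsSymmMapOdd φ)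
    (hinv : IsInvariantOdd φ) (hcp : IsCPOdd φ)
    (π : Fin (r + 1) → A → (K →L[ℂ] K)) (V : H →L[ℂ] K)
    (hrep : IsRepFamily π) (hdil : IsDilation φ π V) (hmin : IsMinimalDil π V) :
    (∀ (T₁ T₂ : K →L[ℂ] K) (c : ℂ) (x : Fin r → A) (y : A) (z : Fin r → A),
        phiT π V (T₁ + c • T₂) x y z = phiT π V T₁ x y z + c • phiT π V T₂ x y z) ∧
    (∀ T₁ T₂ : K →L[ℂ] K, InCommutant π T₁ → InCommutant π T₂ →
        (∀ (x : Fin r → A) (y : A) (z : Fin r → A),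
          phiT π V T₁ x y z = phiT π V T₂ x y z) → T₁ = T₂) :=
  stmt12_general π V hrep hmin
end
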